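/- Let σ > 0, let γ_σ denote the Normal distribution N(−σ²/2, σ²), and let Φ denote the cumulative distribution function of the standard Normal distribution. Then ∫∫ min(1, exp(z'−z)) γ_σ(dz) γ_σ(dz') = 1/2 + exp(σ²) (1 − Φ(√2 σ)); equivalently this double integral equals (1/2)(1 + exp(σ²) Erfc(σ)), where Erfc is the complementary error function. -/

import Mathlib

/-! For independent `Z, Z' ∼ N(m, v)` the difference `W = Z' - Z` is `N(0, 2v)`, so the double
integral is `𝔼[min(1, e^W)] = P(W > 0) + 𝔼[e^W; W ≤ 0]`. The first term is `1/2` by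
symmetry. Exponential tilting, `e^w N(0, 2v)(dw) = e^v N(2v, 2v)(dw)`, turns the second into
`e^v P(N(2v, 2v) ≤ 0) = e^v Φ(-√(2v)) = e^v (1 - Φ(√(2v)))`. -/

open MeasureTheory ProbabilityTheory

/-- The cumulative distribution function `Φ` of the standard Normal distribution. -/
noncomputable def stdNormalCDF (x : ℝ) : ℝ :=
  ((gaussianReal 0 1) (Set.Iic x)).toReal

open Real Set
open scoped NNReal

theorem integral_integral_sub_eq_integral_conv_map_neg {G E : Type*} [AddGroup G]
    [MeasurableSpace G] [MeasurableAdd₂ G] [MeasurableNeg G] [NormedAddCommGroup E]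
    [NormedSpace ℝ E] {μ ν : Measure G} [SFinite μ] [SFinite ν] {f : G → E}
    (hf : Integrable f (ν ∗ μ.map (-·))) :
    ∫ x, ∫ y, f (y - x) ∂ν ∂μ = ∫ w, f w ∂(ν ∗ μ.map (-·)) := by
  have hprod : Integrable (fun p : G × G ↦ f (p.1 + p.2)) (ν.prod (μ.map (-·))) :=
    (integrable_map_measure hf.aestronglyMeasurable measurable_add.aemeasurable).mp hf
  calc ∫ x, ∫ y, f (y - x) ∂ν ∂μ = ∫ u, ∫ y, f (y + u) ∂ν ∂(μ.map (-·)) := by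
        rw [integral_map measurable_neg.aemeasurable
          hprod.integral_prod_right.aestronglyMeasurable]
        simp only [sub_eq_add_neg]
    _ = ∫ p, f (p.1 + p.2) ∂(ν.prod (μ.map (-·))) := (integral_prod_symm _ hprod).symm
    _ = ∫ w, f w ∂(ν ∗ μ.map (-·)) :=
        (integral_map measurable_add.aemeasurable hf.aestronglyMeasurable).symm

theorem integral_integral_sub_gaussianReal {E : Type*} [NormedAddCommGroup E] [NormedSpace ℝ E]
    {m₁ m₂ : ℝ} {v₁ v₂ : ℝ≥0} {f : ℝ → E}
    (hf : Integrable f (gaussianReal (m₂ - m₁) (v₂ + v₁))) :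
    ∫ x, ∫ y, f (y - x) ∂gaussianReal m₂ v₂ ∂gaussianReal m₁ v₁
      = ∫ w, f w ∂gaussianReal (m₂ - m₁) (v₂ + v₁) := by
  have hconv : gaussianReal m₂ v₂ ∗ (gaussianReal m₁ v₁).map (-·)
      = gaussianReal (m₂ - m₁) (v₂ + v₁) := by
    rw [gaussianReal_map_neg, gaussianReal_conv_gaussianReal, sub_eq_add_neg]
  rw [← hconv] at hf ⊢
  exact integral_integral_sub_eq_integral_conv_map_neg hf

theorem exp_mul_mul_gaussianPDFReal (μ : ℝ) (v : ℝ≥0) (t x : ℝ) :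
    exp (t * x) * gaussianPDFReal μ v x
      = exp (μ * t + v * t ^ 2 / 2) * gaussianPDFReal (μ + v * t) v x := by
  rcases eq_or_ne v 0 with rfl | hv
  · simp [gaussianPDFReal_zero_var]
  have hv' : (v : ℝ) ≠ 0 := NNReal.coe_ne_zero.mpr hv
  simp only [gaussianPDFReal_def]
  rw [mul_left_comm, mul_left_comm (exp _), ← exp_add, ← exp_add]
  congr 2
  field_simp
  ring

theorem setIntegral_exp_mul_gaussianReal (μ t : ℝ) {v : ℝ≥0} (hv : v ≠ 0) {s : Set ℝ}
    (hs : MeasurableSet s) :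
    ∫ x in s, exp (t * x) ∂gaussianReal μ v
      = exp (μ * t + v * t ^ 2 / 2) * (gaussianReal (μ + v * t) v).real s := by
  rw [← integral_indicator hs, integral_gaussianReal_eq_integral_smul hv]
  simp_rw [smul_eq_mul, ← indicator_mul_right, integral_indicator hs,
    mul_comm (gaussianPDFReal _ _ _), exp_mul_mul_gaussianPDFReal, integral_const_mul]
  rw [measureReal_def, gaussianReal_apply_eq_integral _ hv,
    ENNReal.toReal_ofReal (setIntegral_nonneg hs fun x _ ↦ gaussianPDFReal_nonneg _ _ x)]

theorem gaussianReal_real_Iic (μ x : ℝ) {v : ℝ≥0} (hv : v ≠ 0) :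
    (gaussianReal μ v).real (Iic x) = stdNormalCDF ((x - μ) / √v) := by
  have hsqrt : 0 < √(v : ℝ) := Real.sqrt_pos.mpr (by positivity)
  have hstd : (gaussianReal μ v).map (fun y ↦ (y - μ) / √v) = gaussianReal 0 1 := by
    rw [show (fun y ↦ (y - μ) / √v) = (· / √v) ∘ (· - μ) from rfl,
      ← Measure.map_map (by fun_prop) (by fun_prop), gaussianReal_map_sub_const,
      gaussianReal_map_div_const, sub_self, zero_div]
    congr
    ext
    simp [Real.sq_sqrt, hv]
  have hpre : (fun y ↦ (y - μ) / √v) ⁻¹' Iic ((x - μ) / √v) = Iic x := by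
    ext y
    simp [div_le_div_iff_of_pos_right hsqrt]
  rw [stdNormalCDF, ← measureReal_def, ← hstd,
    map_measureReal_apply (by fun_prop) measurableSet_Iic, hpre]

theorem stdNormalCDF_neg (a : ℝ) : stdNormalCDF (-a) = 1 - stdNormalCDF a := by
  have := nullSingletonClass_gaussianReal (μ := 0) one_ne_zero
  have hpre : (fun y : ℝ ↦ -y) ⁻¹' Iic (-a) = (Iio a)ᶜ := by
    ext y
    simp
  have hsymm : (gaussianReal 0 1).map (-·) = gaussianReal 0 1 := by
    simpa using gaussianReal_map_neg (μ := 0) (v := 1)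
  rw [stdNormalCDF, stdNormalCDF, ← measureReal_def, ← measureReal_def]
  nth_rewrite 1 [← hsymm]
  rw [map_measureReal_apply (by fun_prop) measurableSet_Iic, hpre,
    probReal_compl_eq_one_sub measurableSet_Iio, measureReal_congr Iio_ae_eq_Iic]

theorem stdNormalCDF_zero : stdNormalCDF 0 = 1 / 2 := by
  linarith [neg_zero (G := ℝ) ▸ stdNormalCDF_neg 0]

theorem integrable_min_one_exp (μ : Measure ℝ) [IsFiniteMeasure μ] :
    Integrable (fun w ↦ min 1 (exp w)) μ :=
  Integrable.of_bound (by fun_prop) 1 (ae_of_all _ fun w ↦ by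
    rw [norm_of_nonneg (le_min zero_le_one (exp_pos w).le)]
    exact min_le_left _ _)

theorem integral_min_one_exp_gaussianReal {v : ℝ≥0} (hv : v ≠ 0) :
    ∫ w, min 1 (exp w) ∂gaussianReal 0 v = 1 / 2 + exp (v / 2) * (1 - stdNormalCDF √v) := by
  have hneg : ∫ w in Iic 0, min 1 (exp w) ∂gaussianReal 0 v
      = exp (v / 2) * (1 - stdNormalCDF √v) := by
    rw [setIntegral_congr_fun measurableSet_Iic fun w (hw : w ≤ 0) ↦
      min_eq_right (exp_le_one_iff.mpr hw)]
    have htilt := setIntegral_exp_mul_gaussianReal 0 1 hv (measurableSet_Iic (a := 0))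
    simp only [one_mul, zero_add, one_pow, mul_one] at htilt
    rw [htilt, gaussianReal_real_Iic _ _ hv, zero_sub, neg_div, div_sqrt, stdNormalCDF_neg]
  have hpos : ∫ w in Ioi 0, min 1 (exp w) ∂gaussianReal 0 v = 1 / 2 := by
    rw [setIntegral_congr_fun measurableSet_Ioi fun w (hw : 0 < w) ↦
        min_eq_left (one_le_exp hw.le),
      setIntegral_const, smul_eq_mul, mul_one, ← compl_Iic,
      probReal_compl_eq_one_sub measurableSet_Iic, gaussianReal_real_Iic _ _ hv, sub_self,
      zero_div, stdNormalCDF_zero]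
    norm_num
  rw [← integral_add_compl measurableSet_Iic (integrable_min_one_exp _), compl_Iic, hneg, hpos]
  ring

/-- Under the large-sample approximation `γ_σ = N(-σ²/2, σ²)` for the log-likelihood
error, the probability that the coupled PIMH chains meet at the first iteration is
`∫∫ min(1, exp(z'-z)) γ_σ(dz) γ_σ(dz') = 1/2 + exp(σ²) (1 - Φ(√2 σ))`. -/
theorem prob_meet_at_one_gaussian (σ : ℝ) (hσ : 0 < σ) :
    ∫ z, (∫ z', min 1 (Real.exp (z' - z))
        ∂(gaussianReal (-σ ^ 2 / 2) ⟨σ ^ 2, sq_nonneg σ⟩))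
        ∂(gaussianReal (-σ ^ 2 / 2) ⟨σ ^ 2, sq_nonneg σ⟩)
      = 1 / 2 + Real.exp (σ ^ 2) * (1 - stdNormalCDF (Real.sqrt 2 * σ)) := by
  set v : ℝ≥0 := ⟨σ ^ 2, sq_nonneg σ⟩
  have hvσ : (v : ℝ) = σ ^ 2 := rfl
  have hv : 0 < v := NNReal.coe_pos.mp (hvσ ▸ by positivity)
  refine (integral_integral_sub_gaussianReal (integrable_min_one_exp _)).trans ?_
  rw [sub_self, integral_min_one_exp_gaussianReal (add_pos hv hv).ne', NNReal.coe_add, hvσ,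
    ← two_mul, mul_div_cancel_left₀ _ two_ne_zero, sqrt_mul zero_le_two, sqrt_sq hσ.le]
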